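/- Let G be an acyclic grade graph. Then for all x, y ∈ V the set {p ∈ Paths(x,y) | w_G(p) ≠ 0} of paths from x to y with nonzero weight is finite. -/

import Mathlib

open scoped Classical

/-- Weight of a path (nonempty list of vertices) in a grade graph. -/
def pathWeight {V R : Type*} [Semiring R] (G : V → V → R) : List V → R
  | [] => 1
  | [_] => 1
  | x :: y :: p => G x y * pathWeight G (y :: p)

/-- The set of non-source nodes of a grade graph. -/
def Nodes {V R : Type*} [Zero R] (G : V → V → R) : Set V := {y | ∃ x, G x y ≠ 0}

/-- Paths from `x` to `y`: nonempty lists with head `x` and last element `y`. -/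
def PathsBtw {V : Type*} (x y : V) : Set (List V) :=
  {p | p ≠ [] ∧ p.head? = some x ∧ p.getLast? = some y}

/-- A cycle: a path with more than one node and equal endpoints. -/
def IsCyclePath {V : Type*} (p : List V) : Prop := 1 < p.length ∧ p.head? = p.getLast?

/-- A grade graph is acyclic if every cycle has weight zero. -/
def Acyclic {V R : Type*} [Semiring R] (G : V → V → R) : Prop :=
  ∀ p : List V, IsCyclePath p → pathWeight G p = 0

/-- Reflexive and transitive closure of a grade graph:
`G*(x,y) = Σ_{p ∈ Paths(x,y)} w_G(p)`. -/
noncomputable def gstar {V R : Type*} [Semiring R] (G : V → V → R) (x y : V) : R :=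
  ∑ᶠ p ∈ PathsBtw x y, pathWeight G p

/-- Grade matrix multiplication. -/
noncomputable def matMul {V R : Type*} [Semiring R] (M₁ M₂ : V → V → R) (x y : V) : R :=
  ∑ᶠ z, M₁ x z * M₂ z y

/-- Identity grade matrix. -/
noncomputable def matId {V R : Type*} [Semiring R] (x y : V) : R := if x = y then 1 else 0

/-- `n`-fold product of a grade graph with itself, with `G⁰ = I`. -/
noncomputable def matPow {V R : Type*} [Semiring R] (G : V → V → R) : ℕ → V → V → R
  | 0 => matId
  | n + 1 => matMul G (matPow G n)

/-- Multiplication of a grade context by a grade matrix: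
`(γ·M)(x) = Σ_y γ(y)·M(y,x)`. -/
noncomputable def ctxMul {V R : Type*} [Semiring R] (γ : V → R) (M : V → V → R) (x : V) : R :=
  ∑ᶠ y, γ y * M y x

/-- A grade matrix: every row has finite support. -/
def RowFinite {V R : Type*} [Zero R] (M : V → V → R) : Prop :=
  ∀ x, {y | M x y ≠ 0}.Finite


/-! A path of nonzero weight cannot visit a vertex twice: the segment between two visits is a
cycle, its weight is zero, and it is a factor of the weight of the whole path. Hence a path of
nonzero weight from `x` is a duplicate-free list of elements of the finite set
`{x} ∪ Nodes G`, and there are only finitely many such lists. -/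

section

variable {V R : Type*} [Semiring R] {G : V → V → R}

@[simp]
lemma pathWeight_nil : pathWeight G [] = 1 := rfl

@[simp]
lemma pathWeight_singleton (x : V) : pathWeight G [x] = 1 := rfl

@[simp]
lemma pathWeight_cons_cons (x y : V) (p : List V) :
    pathWeight G (x :: y :: p) = G x y * pathWeight G (y :: p) := rfl

lemma pathWeight_append_cons (a : List V) (v : V) (c : List V) :
    pathWeight G (a ++ v :: c) = pathWeight G (a ++ [v]) * pathWeight G (v :: c) := by
  induction a with
  | nil => simp
  | cons u a ih =>
    cases a with
    | nil => simp
    | cons w a =>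
      simp only [List.cons_append] at ih ⊢
      rw [pathWeight_cons_cons, pathWeight_cons_cons, ih, mul_assoc]

lemma pathWeight_ne_zero_of_cons {x : V} {p : List V} (h : pathWeight G (x :: p) ≠ 0) :
    pathWeight G p ≠ 0 := by
  cases p with
  | nil => simpa using h
  | cons y p => exact right_ne_zero_of_mul h

lemma Acyclic.nodup_of_pathWeight_ne_zero (hG : Acyclic G) {p : List V}
    (hp : pathWeight G p ≠ 0) : p.Nodup := by
  induction p with
  | nil => exact List.nodup_nil
  | cons x p ih =>
    refine List.nodup_cons.mpr ⟨fun hx => hp ?_, ih (pathWeight_ne_zero_of_cons hp)⟩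
    obtain ⟨b, c, rfl⟩ := List.append_of_mem hx
    have hcycle : IsCyclePath ((x :: b) ++ [x]) := ⟨by simp, by rw [List.getLast?_concat]; rfl⟩
    rw [← List.cons_append, pathWeight_append_cons, hG _ hcycle, zero_mul]

lemma mem_nodes_of_mem_tail {p : List V} (hp : pathWeight G p ≠ 0) {a : V} (ha : a ∈ p.tail) :
    a ∈ Nodes G := by
  induction p with
  | nil => simp at ha
  | cons x p ih =>
    cases p with
    | nil => simp at ha
    | cons y p =>
      rcases List.mem_cons.mp ha with rfl | ha
      · exact ⟨x, left_ne_zero_of_mul hp⟩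
      · exact ih (pathWeight_ne_zero_of_cons hp) ha

lemma nodes_finite (hG : {q : V × V | G q.1 q.2 ≠ 0}.Finite) : (Nodes G).Finite :=
  (hG.image Prod.snd).subset fun a ⟨u, hu⟩ => ⟨(u, a), hu, rfl⟩

end

lemma Set.Finite.setOf_nodup_forall_mem {α : Type*} {S : Set α} (hS : S.Finite) :
    {l : List α | l.Nodup ∧ ∀ a ∈ l, a ∈ S}.Finite := by
  have : Finite S := hS.to_subtype
  have : Fintype S := Fintype.ofFinite S
  have : Finite {l : List S // l.Nodup} := inferInstance
  refine ((Set.finite_coe_iff.mp this).image (List.map Subtype.val)).subset ?_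
  rintro l ⟨hnd, hl⟩
  exact ⟨l.pmap Subtype.mk hl, hnd.pmap fun _ _ _ _ => Subtype.mk.inj, by simp [List.map_pmap]⟩

theorem paths_nonzero_finite_of_acyclic_general {V R : Type*} [Semiring R]
    (G : V → V → R) (hG : {q : V × V | G q.1 q.2 ≠ 0}.Finite)
    (hacyc : Acyclic G) :
    ∀ x y : V, {p ∈ PathsBtw x y | pathWeight G p ≠ 0}.Finite := by
  intro x y
  refine ((nodes_finite hG).insert x).setOf_nodup_forall_mem.subset ?_
  rintro p ⟨⟨-, hhead, -⟩, hw⟩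
  obtain ⟨q, rfl⟩ : ∃ q, p = x :: q := by cases p <;> simp_all
  refine ⟨hacyc.nodup_of_pathWeight_ne_zero hw, fun a ha => ?_⟩
  rcases List.mem_cons.mp ha with rfl | ha
  · exact Set.mem_insert a _
  · exact Set.mem_insert_of_mem x (mem_nodes_of_mem_tail hw ha)

/-- In an acyclic grade graph `G`, for all `x, y` the set of nonzero-weight paths
from `x` to `y` is finite. -/
theorem paths_nonzero_finite_of_acyclic {V R : Type*} [Semiring R] [PartialOrder R]
    (hadd : ∀ a b c d : R, a ≤ b → c ≤ d → a + c ≤ b + d)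
    (hmul : ∀ a b c d : R, a ≤ b → c ≤ d → a * c ≤ b * d)
    (hzero : ∀ r : R, r ≤ 0 → r = 0)
    (G : V → V → R) (hG : {q : V × V | G q.1 q.2 ≠ 0}.Finite)
    (hacyc : Acyclic G) :
    ∀ x y : V, {p ∈ PathsBtw x y | pathWeight G p ≠ 0}.Finite :=
  paths_nonzero_finite_of_acyclic_general G hG hacyc
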